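/- arXiv:2303.07784 — 4 statements merged into one kernel-verified Lean document; each statement's English description precedes it below -/
import Mathlib

section
/- Let G be a compact Lie group. There exists a constant C such that for every finite abelian subgroup A ≤ G there is a torus T ≤ G (that is, a closed connected commutative subgroup of G) satisfying [A : A ∩ T] ≤ C. -/
/-!
Near `1`, squaring in a Lie group has derivative `2` in a chart, so by the inverse function
theorem it has a local inverse `r`: square roots near `1` exist, are unique, and iterating `r`
contracts to `1`. Fix a small neighbourhood `V` of `1`. For an abelian `A`, the iterated square
roots of the elements of `A ∩ V` still commute, because conjugating a square root by a nearby
commuting element yields another square root near `1`. They generate a subgroup whose closure `T`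
is commutative and also connected: an open subgroup of `T` contains every iterated square root
`r^[m] a`, being the `2^d`-th power of `r^[m+d] a`, which is arbitrarily close to `1`. Finally
`A ∩ V ⊆ T`, and a compact group is covered by finitely many translates of a neighbourhood `O`
with `O⁻¹ O ⊆ V`, which bounds `[A : A ∩ T]` independently of `A`.
-/

open Set Filter Metric Topology NNReal
open scoped Manifold

section Calculus

variable {𝕜 : Type*} [NontriviallyNormedField 𝕜] {E : Type*} [NormedAddCommGroup E]
  [NormedSpace 𝕜 E]

theorem HasStrictFDerivAt.comp_diag_of_eventually_unital {m : E × E → E} {L : E × E →L[𝕜] E}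
    {p : E} (hm : HasStrictFDerivAt m L (p, p)) (hl : ∀ᶠ x in 𝓝 p, m (x, p) = x)
    (hr : ∀ᶠ x in 𝓝 p, m (p, x) = x) :
    HasStrictFDerivAt (fun x => m (x, x)) ((2 : 𝕜) • ContinuousLinearMap.id 𝕜 E) p := by
  have hinl : L.comp (ContinuousLinearMap.inl 𝕜 E E) = ContinuousLinearMap.id 𝕜 E :=
    (hm.hasFDerivAt.comp (f := fun x => (x, p)) p (hasFDerivAt_prodMk_left p p)).unique
      ((hasFDerivAt_id p).congr_of_eventuallyEq hl)
  have hinr : L.comp (ContinuousLinearMap.inr 𝕜 E E) = ContinuousLinearMap.id 𝕜 E :=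
    (hm.hasFDerivAt.comp (f := fun x => (p, x)) p (hasFDerivAt_prodMk_right p p)).unique
      ((hasFDerivAt_id p).congr_of_eventuallyEq hr)
  convert hm.comp (f := fun x => (x, x)) p
    ((hasStrictFDerivAt_id p).prodMk (hasStrictFDerivAt_id p)) using 1
  ext u
  have hu : ((u, u) : E × E) = (u, 0) + (0, u) := by simp
  have hl := congrArg (· u) hinl
  have hr := congrArg (· u) hinr
  simp only [ContinuousLinearMap.comp_apply, ContinuousLinearMap.inl_apply,
    ContinuousLinearMap.inr_apply, ContinuousLinearMap.id_apply] at hl hr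
  simp only [ContinuousLinearMap.comp_apply, ContinuousLinearMap.prod_apply,
    ContinuousLinearMap.id_apply, hu, map_add, hl, hr, two_smul, add_apply]

theorem HasStrictFDerivAt.exists_contracting_localInverse [CompleteSpace E] {f : E → E}
    {e : E ≃L[𝕜] E} {p : E} (hf : HasStrictFDerivAt f (e : E →L[𝕜] E) p) (hfp : f p = p)
    (he : ‖(e.symm : E →L[𝕜] E)‖₊ < 1) :
    ∃ K < (1 : ℝ≥0), ∃ g : E → E,
      ∀ᶠ x in 𝓝 p, g (f x) = x ∧ f (g x) = x ∧ dist (g x) p ≤ K * dist x p := by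
  obtain ⟨K, heK, hK⟩ := exists_between he
  have hg := hf.to_localInverse
  have hgp := hf.localInverse_apply_image
  have hright := hf.eventually_right_inverse
  rw [hfp] at hg hgp hright
  obtain ⟨s, hs, hlip⟩ := hg.exists_lipschitzOnWith_of_nnnorm_lt K heK
  refine ⟨K, hK, hf.localInverse f e p, ?_⟩
  filter_upwards [hf.eventually_left_inverse, hright, hs] with x hleft hright hx
  refine ⟨hleft, hright, ?_⟩
  simpa only [hgp] using hlip.dist_le_mul x hx p (mem_of_mem_nhds hs)

end Calculus

theorem tendsto_iterate_of_dist_le_mul {X : Type*} [PseudoMetricSpace X] {g : X → X}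
    {s : Set X} {p : X} {K : ℝ≥0} (hK : K < 1) (hs : MapsTo g s s)
    (hg : ∀ x ∈ s, dist (g x) p ≤ K * dist x p) {x : X} (hx : x ∈ s) :
    Tendsto (fun k => g^[k] x) atTop (𝓝 p) := by
  have hdist : ∀ k : ℕ, dist (g^[k] x) p ≤ K ^ k * dist x p := by
    intro k
    induction k with
    | zero => simp
    | succ k ih =>
      rw [Function.iterate_succ_apply', pow_succ', mul_assoc]
      exact (hg _ (hs.iterate k hx)).trans (mul_le_mul_of_nonneg_left ih K.2)
  refine tendsto_iff_dist_tendsto_zero.mpr (squeeze_zero (fun _ => dist_nonneg) hdist ?_)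
  simpa using (tendsto_pow_atTop_nhds_zero_of_lt_one K.2 hK).mul_const (dist x p)

theorem iterate_apply_of_semiconj_on {α β : Type*} {f : α → β} {ga : α → α} {gb : β → β}
    {s : Set α} (hs : MapsTo ga s s) (h : ∀ y ∈ s, gb (f y) = f (ga y)) {y : α} (hy : y ∈ s)
    (k : ℕ) : gb^[k] (f y) = f (ga^[k] y) := by
  induction k with
  | zero => rfl
  | succ k ih =>
    rw [Function.iterate_succ_apply', ih, h _ (hs.iterate k hy), Function.iterate_succ_apply']

section TopologicalGroup

variable {G : Type*} [Group G] [TopologicalSpace G] [IsTopologicalGroup G]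

theorem exists_nhds_one_mul_mul_inv_mem {W : Set G} (hW : W ∈ 𝓝 (1 : G)) :
    ∃ N ∈ 𝓝 (1 : G), ∀ a ∈ N, ∀ b ∈ N, ∀ c ∈ N, a * b * c⁻¹ ∈ W := by
  obtain ⟨N₁, hN₁, hdiv⟩ := exists_nhds_split_inv hW
  obtain ⟨N₂, hN₂, hmul⟩ := exists_nhds_one_split hN₁
  exact ⟨N₁ ∩ N₂, inter_mem hN₁ hN₂, fun a ha b hb c hc => by
    simpa [div_eq_mul_inv] using hdiv _ (hmul a ha.2 b hb.2) c hc.1⟩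

theorem exists_relIndex_le_of_inter_subset [CompactSpace G] {V : Set G} (hV : V ∈ 𝓝 (1 : G)) :
    ∃ C : ℕ, ∀ A T : Subgroup G, (A : Set G) ∩ V ⊆ T → T.relIndex A ≤ C := by
  obtain ⟨N, hN, hNV⟩ := exists_nhds_split_inv hV
  obtain ⟨t, ht⟩ := compact_covered_by_mul_left_translates isCompact_univ
    ⟨1, mem_interior_iff_mem_nhds.mpr (inv_mem_nhds_one G hN)⟩
  choose idx hidx_mem hidx using fun x : G => by simpa using ht (mem_univ x)
  refine ⟨t.card, fun A T hAT => ?_⟩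
  -- Two elements of `A` moved into `N⁻¹` by the same element of `t` differ by an element of `V`.
  have hinj : Function.Injective fun q : A ⧸ T.subgroupOf A =>
      (⟨idx q.out, hidx_mem _⟩ : (t : Set G)) := by
    intro q₁ q₂ hq
    rw [← QuotientGroup.out_eq' q₁, ← QuotientGroup.out_eq' q₂, QuotientGroup.eq,
      Subgroup.mem_subgroupOf]
    have hmem := hNV _ (hidx (q₁.out : G)) _ (hidx (q₂.out : G))
    have hq' : idx (q₁.out : G) = idx q₂.out := congrArg Subtype.val hq
    rw [hq', div_eq_mul_inv, mul_inv_rev, inv_inv, inv_inv, mul_assoc,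
      inv_mul_cancel_left] at hmem
    exact hAT ⟨(q₁.out⁻¹ * q₂.out).2, hmem⟩
  simpa [Subgroup.relIndex, Subgroup.index] using Nat.card_le_card_of_injective _ hinj

theorem connectedSpace_of_forall_openSubgroup_eq_top [CompactSpace G]
    (h : ∀ U : OpenSubgroup G, U = ⊤) : ConnectedSpace G := by
  refine connectedSpace_iff_clopen.mpr ⟨⟨1⟩, fun s hs => ?_⟩
  have key : ∀ t : Set G, IsClopen t → 1 ∈ t → t = univ := fun t ht h1 => by
    obtain ⟨U, hU⟩ := IsTopologicalGroup.exist_openSubgroup_sub_clopen_nhds_of_one ht h1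
    exact eq_univ_of_univ_subset (by simpa [h U] using hU)
  by_cases h1 : (1 : G) ∈ s
  · exact Or.inr (key s hs h1)
  · exact Or.inl (compl_univ_iff.mp (key sᶜ hs.compl h1))

theorem isConnected_topologicalClosure_closure [CompactSpace G] {S : Set G}
    (hS : ∀ s ∈ S, ∀ U ∈ 𝓝 (1 : G), ∃ t ∈ S ∩ U, ∃ k : ℕ, t ^ k = s) :
    IsConnected ((Subgroup.closure S).topologicalClosure : Set G) := by
  set T := (Subgroup.closure S).topologicalClosure
  have hT : IsClosed (T : Set G) := Subgroup.isClosed_topologicalClosure _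
  have hST : S ⊆ T := Subgroup.subset_closure.trans (Subgroup.le_topologicalClosure _)
  have : CompactSpace T := isCompact_iff_compactSpace.mp hT.isCompact
  have : ConnectedSpace T := connectedSpace_of_forall_openSubgroup_eq_top fun U => by
    obtain ⟨Θ, hΘ, hΘU⟩ := isOpen_induced_iff.mp U.isOpen
    have h1Θ : (1 : G) ∈ Θ := by
      simpa using (hΘU ▸ U.one_mem : (1 : T) ∈ Subtype.val ⁻¹' Θ)
    have hSU : S ⊆ (U : Subgroup T).map T.subtype := by
      intro s hs
      obtain ⟨t, ⟨htS, htΘ⟩, k, rfl⟩ := hS s hs Θ (hΘ.mem_nhds h1Θ)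
      have htU : (⟨t, hST htS⟩ : T) ∈ U := by
        rw [← SetLike.mem_coe, ← hΘU]
        exact htΘ
      exact ⟨⟨t, hST htS⟩ ^ k, pow_mem htU k, rfl⟩
    have hclosed : IsClosed (((U : Subgroup T).map T.subtype : Subgroup G) : Set G) := by
      rw [Subgroup.coe_map]
      exact hT.isClosedMap_subtype_val _ U.isClosed
    have hTU := Subgroup.topologicalClosure_minimal _ ((Subgroup.closure_le _).mpr hSU) hclosed
    ext x
    obtain ⟨u, hu, hux⟩ := hTU x.2
    simpa [← Subtype.ext hux] using hu
  simpa using isConnected_range (continuous_subtype_val (p := (· ∈ T)))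

theorem commute_of_mem_topologicalClosure_closure [T2Space G] {S : Set G}
    (hS : ∀ x ∈ S, ∀ y ∈ S, x * y = y * x) :
    ∀ x ∈ (Subgroup.closure S).topologicalClosure,
      ∀ y ∈ (Subgroup.closure S).topologicalClosure, x * y = y * x := by
  have := Subgroup.isMulCommutative_closure hS
  let := (Subgroup.closure S).commGroupTopologicalClosure fun x y => Std.Commutative.comm x y
  exact fun x hx y hy => congrArg Subtype.val (mul_comm (⟨x, hx⟩ : _) ⟨y, hy⟩)

end TopologicalGroup

structure IsContractingSqrtOn {G : Type*} [Group G] [TopologicalSpace G] (r : G → G)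
    (W : Set G) : Prop where
  mul_self : ∀ x ∈ W, r x * r x = x
  eq_of_mul_self_eq : ∀ x ∈ W, ∀ c ∈ W, c * c = x → c = r x
  tendsto_iterate : ∀ x ∈ W, Tendsto (fun k => r^[k] x) atTop (𝓝 1)
  exists_mapsTo : ∀ N ∈ 𝓝 (1 : G), ∃ V ∈ 𝓝 (1 : G), V ⊆ N ∧ MapsTo r V V

namespace IsContractingSqrtOn

variable {G : Type*} [Group G] [TopologicalSpace G] {r : G → G} {W V : Set G}

theorem iterate_pow (hr : IsContractingSqrtOn r W) (hVW : V ⊆ W) (hV : MapsTo r V V) {x : G}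
    (hx : x ∈ V) (m d : ℕ) : (r^[m + d] x) ^ 2 ^ d = r^[m] x := by
  induction d with
  | zero => simp
  | succ d ih =>
    rw [pow_succ', pow_mul, ← add_assoc, Function.iterate_succ_apply', sq,
      hr.mul_self _ (hVW (hV.iterate _ hx)), ih]

theorem commute_iterate (hr : IsContractingSqrtOn r W) (hV : MapsTo r V V)
    (hconj : ∀ a ∈ V, ∀ b ∈ V, ∀ c ∈ V, a * b * c⁻¹ ∈ W) {x y : G} (hx : x ∈ V) (hy : y ∈ V)
    (hxy : Commute x y) (j k : ℕ) : Commute (r^[j] x) (r^[k] y) := by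
  -- `x * r y * x⁻¹` is a square root of `y` lying in `W`, hence equal to `r y`.
  have hstep : ∀ x ∈ V, ∀ y ∈ V, Commute x y → Commute x (r y) := fun x hx y hy hxy => by
    have hyW : y ∈ W := by simpa using hconj y hy y hy y hy
    have hsq : x * r y * x⁻¹ * (x * r y * x⁻¹) = y := by
      simp only [mul_assoc, inv_mul_cancel_left]
      rw [← mul_assoc (r y), hr.mul_self y hyW, ← mul_assoc, hxy.eq, mul_inv_cancel_right]
    exact mul_inv_eq_iff_eq_mul.mp
      (hr.eq_of_mul_self_eq y hyW _ (hconj x hx (r y) (hV hy) x hx) hsq)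
  have hleft : ∀ x ∈ V, ∀ y ∈ V, Commute x y → ∀ k, Commute x (r^[k] y) :=
    fun x hx y hy hxy k => by
      induction k with
      | zero => exact hxy
      | succ k ih =>
        rw [Function.iterate_succ_apply']
        exact hstep x hx _ (hV.iterate k hy) ih
  exact (hleft _ (hV.iterate k hy) x hx (hleft x hx y hy hxy k).symm j).symm

theorem exists_torus_superset [IsTopologicalGroup G] [CompactSpace G] [T2Space G]
    (hr : IsContractingSqrtOn r W) (hV : MapsTo r V V)
    (hconj : ∀ a ∈ V, ∀ b ∈ V, ∀ c ∈ V, a * b * c⁻¹ ∈ W) {s : Set G} (hsV : s ⊆ V)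
    (hs : ∀ x ∈ s, ∀ y ∈ s, x * y = y * x) :
    ∃ T : Subgroup G, IsClosed (T : Set G) ∧ IsConnected (T : Set G) ∧
      (∀ x ∈ T, ∀ y ∈ T, x * y = y * x) ∧ s ⊆ T := by
  have hVW : V ⊆ W := fun y hy => by simpa using hconj y hy y hy y hy
  set S := ⋃ k : ℕ, r^[k] '' s
  refine ⟨(Subgroup.closure S).topologicalClosure, Subgroup.isClosed_topologicalClosure _,
    isConnected_topologicalClosure_closure ?_, commute_of_mem_topologicalClosure_closure ?_,
    fun x hx => Subgroup.le_topologicalClosure _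
      (Subgroup.subset_closure (mem_iUnion.mpr ⟨0, x, hx, rfl⟩))⟩
  · intro _ hy U hU
    obtain ⟨m, a, ha, rfl⟩ := mem_iUnion.mp hy
    obtain ⟨d, hd⟩ := eventually_atTop.mp (hr.tendsto_iterate a (hVW (hsV ha)) hU)
    exact ⟨r^[m + d] a, ⟨mem_iUnion.mpr ⟨m + d, a, ha, rfl⟩, hd _ (Nat.le_add_left d m)⟩, 2 ^ d,
      hr.iterate_pow hVW hV (hsV ha) m d⟩
  · intro _ hx _ hy
    obtain ⟨j, a, ha, rfl⟩ := mem_iUnion.mp hx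
    obtain ⟨k, b, hb, rfl⟩ := mem_iUnion.mp hy
    exact (hr.commute_iterate hV hconj (hsV ha) (hsV hb) (hs a ha b hb) j k).eq

end IsContractingSqrtOn

section LocalSqrt

variable {G : Type*} [Group G] [TopologicalSpace G]

theorem OpenPartialHomeomorph.exists_contracting_localInverse_sq {E : Type*}
    [NormedAddCommGroup E] [NormedSpace ℝ E] [CompleteSpace E] (φ : OpenPartialHomeomorph G E)
    (h1 : (1 : G) ∈ φ.source) {L : E × E →L[ℝ] E}
    (hm : HasStrictFDerivAt (fun q : E × E => φ (φ.symm q.1 * φ.symm q.2)) L (φ 1, φ 1)) :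
    ∃ K < (1 : ℝ≥0), ∃ g : E → E, ∀ᶠ y in 𝓝 (φ 1),
      g (φ (φ.symm y * φ.symm y)) = y ∧ φ (φ.symm (g y) * φ.symm (g y)) = y ∧
        dist (g y) (φ 1) ≤ K * dist y (φ 1) := by
  have hp : φ.symm (φ 1) = 1 := φ.left_inv h1
  have hunit : ∀ᶠ y in 𝓝 (φ 1),
      φ (φ.symm y * φ.symm (φ 1)) = y ∧ φ (φ.symm (φ 1) * φ.symm y) = y := by
    filter_upwards [φ.open_target.mem_nhds (φ.map_source h1)] with y hy
    simp [hp, φ.right_inv hy]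
  let e : E ≃L[ℝ] E := ContinuousLinearEquiv.smulLeft (Units.mk0 (2 : ℝ) two_ne_zero)
  have hf : HasStrictFDerivAt (fun y => φ (φ.symm y * φ.symm y)) (e : E →L[ℝ] E) (φ 1) := by
    convert hm.comp_diag_of_eventually_unital (hunit.mono fun _ h => h.1)
      (hunit.mono fun _ h => h.2) using 1
    ext u
    simp [e, Units.smul_def]
  have he : ‖(e.symm : E →L[ℝ] E)‖₊ < 1 := by
    have hsymm : ∀ u, e.symm u = (2⁻¹ : ℝ) • u := fun u =>
      e.symm_apply_eq.mpr (by simp [e, Units.smul_def, smul_smul])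
    refine lt_of_le_of_lt (ContinuousLinearMap.opNNNorm_le_bound _ (2⁻¹) fun u => ?_) (by norm_num)
    simp [hsymm, nnnorm_smul]
  exact hf.exists_contracting_localInverse (by simp [hp]) he

theorem OpenPartialHomeomorph.exists_isContractingSqrtOn [ContinuousMul G] {E : Type*}
    [PseudoMetricSpace E] (φ : OpenPartialHomeomorph G E) (h1 : (1 : G) ∈ φ.source) {K : ℝ≥0}
    (hK : K < 1) {g : E → E}
    (hg : ∀ᶠ y in 𝓝 (φ 1), g (φ (φ.symm y * φ.symm y)) = y ∧
      φ (φ.symm (g y) * φ.symm (g y)) = y ∧ dist (g y) (φ 1) ≤ K * dist y (φ 1)) :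
    ∃ W ∈ 𝓝 (1 : G), IsContractingSqrtOn (fun x => φ.symm (g (φ x))) W := by
  set p := φ 1
  have hp : φ.symm p = 1 := φ.left_inv h1
  have hp_target : p ∈ φ.target := φ.map_source h1
  have hsymm : ContinuousAt φ.symm p := φ.continuousAt_symm hp_target
  have hsq : ∀ᶠ y in 𝓝 p, y ∈ φ.target ∧ φ.symm y * φ.symm y ∈ φ.source := by
    have hsource : φ.source ∈ 𝓝 (φ.symm p * φ.symm p) := by
      rw [hp, one_mul]
      exact φ.open_source.mem_nhds h1
    filter_upwards [φ.open_target.mem_nhds hp_target,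
      (hsymm.mul hsymm).preimage_mem_nhds hsource] with y hy hy'
    exact ⟨hy, hy'⟩
  obtain ⟨ρ, hρ, hball⟩ := Metric.mem_nhds_iff.mp (hg.and hsq)
  have hnhds : ∀ δ > 0, φ.symm '' ball p δ ∈ 𝓝 (1 : G) := fun δ hδ => by
    simpa only [hp] using φ.symm.image_mem_nhds hp_target (ball_mem_nhds p hδ)
  have hg_mapsTo : ∀ δ ≤ ρ, MapsTo g (ball p δ) (ball p δ) := fun δ hδ y hy =>
    mem_ball.mpr (((hball (ball_subset_ball hδ hy)).1.2.2).trans_lt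
      ((mul_le_of_le_one_left dist_nonneg (NNReal.coe_le_one.mpr hK.le)).trans_lt hy))
  set r : G → G := fun x => φ.symm (g (φ x))
  have hr : ∀ y ∈ ball p ρ, r (φ.symm y) = φ.symm (g y) := fun y hy => by
    simp only [r, φ.right_inv (hball hy).2.1]
  have hr_mapsTo : ∀ δ ≤ ρ, MapsTo r (φ.symm '' ball p δ) (φ.symm '' ball p δ) := by
    rintro δ hδ _ ⟨y, hy, rfl⟩
    exact ⟨g y, hg_mapsTo δ hδ hy, (hr y (ball_subset_ball hδ hy)).symm⟩
  refine ⟨φ.symm '' ball p ρ, hnhds ρ hρ, ⟨?_, ?_, ?_, ?_⟩⟩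
  · rintro _ ⟨y, hy, rfl⟩
    rw [hr y hy, ← φ.left_inv (hball (hg_mapsTo ρ le_rfl hy)).2.2, (hball hy).1.2.1]
  · rintro _ ⟨y, hy, rfl⟩ _ ⟨z, hz, rfl⟩ hzy
    rw [hr y hy, ← (hball hz).1.1, hzy, φ.right_inv (hball hy).2.1]
  · rintro _ ⟨y, hy, rfl⟩
    simp only [iterate_apply_of_semiconj_on (hg_mapsTo ρ le_rfl) hr hy]
    rw [← hp]
    exact hsymm.tendsto.comp (tendsto_iterate_of_dist_le_mul hK (hg_mapsTo ρ le_rfl)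
      (fun x hx => (hball hx).1.2.2) hy)
  · intro N hN
    obtain ⟨δ, hδ, hδN⟩ := Metric.mem_nhds_iff.mp (hsymm.preimage_mem_nhds (by rwa [hp]))
    refine ⟨φ.symm '' ball p (min δ ρ), hnhds _ (lt_min hδ hρ), ?_, hr_mapsTo _ (min_le_right _ _)⟩
    rintro _ ⟨y, hy, rfl⟩
    exact hδN (ball_subset_ball (min_le_left _ _) hy)

end LocalSqrt

section LieGroup

variable {E : Type*} [NormedAddCommGroup E] [NormedSpace ℝ E]
  {G : Type*} [Group G] [TopologicalSpace G] [ChartedSpace E G] [ContMDiffMul 𝓘(ℝ, E) 1 G]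

theorem contDiffAt_chartAt_mul :
    ContDiffAt ℝ 1 (fun q : E × E => chartAt E (1 : G)
      ((chartAt E (1 : G)).symm q.1 * (chartAt E (1 : G)).symm q.2))
      (chartAt E (1 : G) 1, chartAt E (1 : G) 1) := by
  have h := (contMDiffAt_iff.mp ((contMDiff_mul 𝓘(ℝ, E) 1 (G := G)).contMDiffAt
    (x := ((1 : G), (1 : G))))).2
  simp only [ModelWithCorners.range_eq_univ, contDiffWithinAt_univ, extChartAt_prod, mul_one] at h
  exact h

theorem exists_isContractingSqrtOn [CompleteSpace E] :
    ∃ (r : G → G) (W : Set G), W ∈ 𝓝 (1 : G) ∧ IsContractingSqrtOn r W := by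
  have : ContinuousMul G := continuousMul_of_contMDiffMul 𝓘(ℝ, E) 1
  have h1 := mem_chart_source E (1 : G)
  obtain ⟨K, hK, g, hg⟩ := (chartAt E (1 : G)).exists_contracting_localInverse_sq h1
    (contDiffAt_chartAt_mul.hasStrictFDerivAt one_ne_zero)
  obtain ⟨W, hW, hr⟩ := (chartAt E (1 : G)).exists_isContractingSqrtOn h1 hK hg
  exact ⟨_, W, hW, hr⟩

end LieGroup

/-- Let `G` be a compact Lie group. There exists a constant `C` such that for every finite
abelian subgroup `A ≤ G` there is a torus `T ≤ G` (a closed connected commutative subgroup)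
with `[A : A ∩ T] ≤ C`. -/
theorem compact_lie_group_finite_abelian_almost_in_torus {n : ℕ} (G : Type*) [Group G]
    [TopologicalSpace G] [IsTopologicalGroup G] [CompactSpace G]
    [ChartedSpace (EuclideanSpace ℝ (Fin n)) G] [LieGroup (𝓡 n) (⊤ : ℕ∞) G] :
    ∃ C : ℕ, ∀ A : Subgroup G, Finite A → (∀ x ∈ A, ∀ y ∈ A, x * y = y * x) →
      ∃ T : Subgroup G, IsClosed (T : Set G) ∧ IsConnected (T : Set G) ∧
        (∀ x ∈ T, ∀ y ∈ T, x * y = y * x) ∧ T.relIndex A ≤ C := by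
  have : T1Space G := ChartedSpace.t1Space (EuclideanSpace ℝ (Fin n)) G
  obtain ⟨r, W, hW, hr⟩ := exists_isContractingSqrtOn (E := EuclideanSpace ℝ (Fin n)) (G := G)
  obtain ⟨N, hN, hconj⟩ := exists_nhds_one_mul_mul_inv_mem hW
  obtain ⟨V, hV, hVN, hrV⟩ := hr.exists_mapsTo N hN
  obtain ⟨C, hC⟩ := exists_relIndex_le_of_inter_subset hV
  refine ⟨C, fun A _ hA => ?_⟩
  obtain ⟨T, hT_closed, hT_conn, hT_comm, hAT⟩ := hr.exists_torus_superset hrV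
    (fun a ha b hb c hc => hconj a (hVN ha) b (hVN hb) c (hVN hc)) inter_subset_right
    (fun x hx y hy => hA x hx.1 y hy.1)
  exact ⟨T, hT_closed, hT_conn, hT_comm, hC A T hAT⟩
end

section
/- (Minkowski) Fix a natural number k ≥ 1. The componentwise reduction modulo 3 homomorphism GL(k, ℤ) → GL(k, ℤ/3ℤ) is injective on every finite subgroup of GL(k, ℤ); consequently, every finite subgroup G ≤ GL(k, ℤ) satisfies |G| ≤ 3^{k²}. -/
/-!
If `A ∈ GL(k, ℤ)` has finite order and `A ≡ 1 (mod 3)`, some power of `A` has prime order `p`,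
so it suffices to show that `A = 1 + 3X` with `A ^ p = 1` forces `X = 0`. Everything happens in
the commutative ring `ℤ[X]`, where expanding `(1 + 3^s X) ^ p = 1` shows that `3^s X` is in fact
divisible by `3^(s+1)`: for `p ≠ 3` the linear term `p 3^s X` dominates modulo `3^(2s)`, and for
`p = 3` the cube expands to `3^(s+1) (X + 3(…))`. Hence `X` is divisible by every power of `3`,
so `X = 0`. The kernel of reduction modulo `3` is therefore torsion-free, so reduction is injective
on every finite subgroup, which then embeds into `GL(k, ℤ/3ℤ) ⊆ M_k(ℤ/3ℤ)`.
-/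

section CommRing

variable {S : Type*} [CommRing S]

theorem three_dvd_of_one_add_three_pow_mul_pow_eq_one (h3 : IsLeftRegular (3 : S))
    {p s : ℕ} (hp : p.Prime) (hs : s ≠ 0) {x : S} (h : (1 + 3 ^ s * x) ^ p = 1) : 3 ∣ x := by
  obtain ⟨t, rfl⟩ := Nat.exists_eq_add_one_of_ne_zero hs
  by_cases hp3 : p = 3
  · subst hp3
    have hcube :
        3 ^ (t + 2) * (x + 3 * (3 ^ t * x ^ 2 + 3 ^ (2 * t) * x ^ 3)) = 3 ^ (t + 2) * 0 := by
      linear_combination h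
    have hx := h3.pow (t + 2) hcube
    exact ⟨-(3 ^ t * x ^ 2 + 3 ^ (2 * t) * x ^ 3), by linear_combination hx⟩
  · obtain ⟨c, hc⟩ := sq_dvd_add_pow_sub_sub (3 ^ (t + 1) * x) 1 p
    simp only [one_pow, one_mul] at hc
    have hlin : 3 ^ (t + 1) * (x * p) = 3 ^ (t + 1) * (3 * (-(3 ^ t * x ^ 2 * c))) := by
      linear_combination h - hc
    have hcop : IsCoprime (3 : S) p := by
      have hcopℕ : Nat.Coprime 3 p := (Nat.coprime_primes Nat.prime_three hp).mpr (Ne.symm hp3)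
      simpa using (Nat.isCoprime_iff_coprime.mpr hcopℕ).map (Int.castRingHom S)
    exact hcop.dvd_of_dvd_mul_right ⟨_, h3.pow (t + 1) hlin⟩

theorem three_pow_dvd_of_one_add_three_mul_pow_eq_one (h3 : IsLeftRegular (3 : S))
    {p : ℕ} (hp : p.Prime) {x : S} (h : (1 + 3 * x) ^ p = 1) (n : ℕ) : 3 ^ n ∣ x := by
  induction n with
  | zero => simp
  | succ n ih =>
    obtain ⟨y, rfl⟩ := ih
    rw [← mul_assoc, ← pow_succ'] at h
    obtain ⟨z, rfl⟩ := three_dvd_of_one_add_three_pow_mul_pow_eq_one h3 hp n.succ_ne_zero h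
    exact ⟨z, by ring⟩

end CommRing

open scoped IsMulCommutative in
theorem eq_zero_of_one_add_three_mul_pow_eq_one {R : Type*} [Ring R] (h3 : IsLeftRegular (3 : R))
    (hsep : ∀ y : R, (∀ n : ℕ, 3 ^ n ∣ y) → y = 0)
    {p : ℕ} (hp : p.Prime) {x : R} (h : (1 + 3 * x) ^ p = 1) : x = 0 := by
  let S := Algebra.adjoin ℤ {x}
  let y : S := ⟨x, Algebra.self_mem_adjoin_singleton ℤ x⟩
  have h3S : IsLeftRegular (3 : S) := fun a b hab => Subtype.ext (h3 (congrArg Subtype.val hab))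
  refine hsep x fun n => ?_
  obtain ⟨z, hz⟩ := three_pow_dvd_of_one_add_three_mul_pow_eq_one h3S hp (x := y) (Subtype.ext h) n
  exact ⟨z, congrArg Subtype.val hz⟩

namespace Matrix

variable {n : Type*} [Fintype n] [DecidableEq n]

theorem three_mul_apply (Y : Matrix n n ℤ) (i j : n) :
    ((3 : Matrix n n ℤ) * Y) i j = 3 * Y i j := by
  simp [← diagonal_ofNat]

theorem three_pow_mul_apply (m : ℕ) (Y : Matrix n n ℤ) (i j : n) :
    ((3 : Matrix n n ℤ) ^ m * Y) i j = 3 ^ m * Y i j := by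
  simp [← diagonal_ofNat, diagonal_pow]

theorem isLeftRegular_three : IsLeftRegular (3 : Matrix n n ℤ) := by
  intro A B hAB
  ext i j
  have hij := congrFun (congrFun hAB i) j
  simp only [three_mul_apply] at hij
  omega

theorem eq_zero_of_forall_three_pow_dvd {Y : Matrix n n ℤ} (h : ∀ m : ℕ, 3 ^ m ∣ Y) : Y = 0 := by
  ext i j
  by_contra hY
  refine FiniteMultiplicity.not_iff_forall.mpr (fun m => ?_)
    ((Int.finiteMultiplicity_iff (a := 3)).mpr ⟨by decide, hY⟩)
  obtain ⟨Z, hZ⟩ := h m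
  exact ⟨Z i j, by rw [hZ, three_pow_mul_apply]⟩

theorem exists_eq_one_add_three_mul_of_map_eq_one {A : Matrix n n ℤ}
    (h : A.map (Int.cast : ℤ → ZMod 3) = 1) : ∃ Y, A = 1 + 3 * Y := by
  have hdvd (i j : n) : (3 : ℤ) ∣ (A - 1) i j := by
    have hij := congrFun (congrFun h i) j
    rw [sub_apply, ← Nat.cast_ofNat, ← ZMod.intCast_eq_intCast_iff_dvd_sub]
    by_cases hij' : i = j <;> simp_all [one_apply]
  refine ⟨of fun i j => (A - 1) i j / 3, ?_⟩
  ext i j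
  rw [add_apply, three_mul_apply, of_apply, Int.mul_ediv_cancel' (hdvd i j), sub_apply]
  ring

end Matrix

namespace Matrix.GeneralLinearGroup

variable {n : Type*} [Fintype n] [DecidableEq n]

abbrev reductionModThree : GL n ℤ →* GL n (ZMod 3) :=
  Units.map (RingHom.mapMatrix (Int.castRingHom (ZMod 3))).toMonoidHom

theorem eq_one_of_isOfFinOrder_of_reductionModThree_eq_one {z : GL n ℤ} (hz : IsOfFinOrder z)
    (hred : reductionModThree z = 1) : z = 1 := by
  by_contra hne
  have hord : orderOf z ≠ 1 := by rwa [Ne, orderOf_eq_one_iff]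
  set p := (orderOf z).minFac
  have hp : p.Prime := Nat.minFac_prime hord
  set w := z ^ (orderOf z / p)
  have hw : orderOf w = p := orderOf_pow_orderOf_div hz.orderOf_pos.ne' (Nat.minFac_dvd _)
  have hredw : reductionModThree w = 1 := by rw [map_pow, hred, one_pow]
  obtain ⟨Y, hY⟩ := exists_eq_one_add_three_mul_of_map_eq_one (A := (w : Matrix n n ℤ))
    (by simpa using congrArg Units.val hredw)
  have hY0 : Y = 0 := eq_zero_of_one_add_three_mul_pow_eq_one isLeftRegular_three
    (fun _ => eq_zero_of_forall_three_pow_dvd) hp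
    (by rw [← hY, ← Units.val_pow_eq_pow_val, ← hw, pow_orderOf_eq_one, Units.val_one])
  have hw1 : w = 1 := Units.ext (by simp [hY, hY0])
  exact hp.one_lt.ne' (by rw [← hw, hw1, orderOf_one])

variable {G : Subgroup (GL n ℤ)} [Finite G]

theorem injOn_reductionModThree : Set.InjOn reductionModThree (G : Set (GL n ℤ)) := by
  intro x hx y hy hxy
  have hfin : IsOfFinOrder (x * y⁻¹) :=
    G.subtype.isOfFinOrder (isOfFinOrder_of_finite (⟨x * y⁻¹, mul_mem hx (inv_mem hy)⟩ : G))
  have hred : reductionModThree (x * y⁻¹) = 1 := by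
    rw [map_mul, map_inv, hxy, mul_inv_cancel]
  exact mul_inv_eq_one.mp (eq_one_of_isOfFinOrder_of_reductionModThree_eq_one hfin hred)

theorem card_le_three_pow_of_finite : Nat.card G ≤ 3 ^ (Fintype.card n ^ 2) :=
  calc Nat.card G = Nat.card (reductionModThree '' (G : Set (GL n ℤ))) :=
        (Nat.card_image_of_injOn injOn_reductionModThree).symm
    _ ≤ Nat.card (GL n (ZMod 3)) := Nat.card_le_card_of_injective _ Subtype.val_injective
    _ ≤ Nat.card (Matrix n n (ZMod 3)) := Nat.card_le_card_of_injective _ Units.val_injective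
    _ = 3 ^ (Fintype.card n ^ 2) := by simp [Matrix, sq, pow_mul]

end Matrix.GeneralLinearGroup

open Matrix.GeneralLinearGroup in
theorem minkowski_lemma_general (k : ℕ)
    (G : Subgroup (Matrix.GeneralLinearGroup (Fin k) ℤ)) (hG : Finite G) :
    Set.InjOn (Units.map (RingHom.mapMatrix (Int.castRingHom (ZMod 3))).toMonoidHom)
        (G : Set (Matrix.GeneralLinearGroup (Fin k) ℤ)) ∧
      Nat.card G ≤ 3 ^ (k ^ 2) :=
  ⟨injOn_reductionModThree, by simpa using card_le_three_pow_of_finite (G := G)⟩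

/-- (Minkowski) For `k ≥ 1`, the entrywise reduction mod `3` homomorphism
`GL(k, ℤ) → GL(k, ℤ/3ℤ)` is injective on every finite subgroup of `GL(k, ℤ)`; consequently
every finite subgroup `G ≤ GL(k, ℤ)` satisfies `|G| ≤ 3 ^ (k²)`. -/
theorem minkowski_lemma (k : ℕ) (hk : 1 ≤ k)
    (G : Subgroup (Matrix.GeneralLinearGroup (Fin k) ℤ)) (hG : Finite G) :
    Set.InjOn (Units.map (RingHom.mapMatrix (Int.castRingHom (ZMod 3))).toMonoidHom)
        (G : Set (Matrix.GeneralLinearGroup (Fin k) ℤ)) ∧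
      Nat.card G ≤ 3 ^ (k ^ 2) :=
  minkowski_lemma_general k G hG
end

section
/- Let X be a connected smooth manifold (without boundary), let G be a finite group acting smoothly and effectively on X via an injective group homomorphism ρ : G → Diff(X), and let x ∈ X be a point fixed by every element of G. Then the group homomorphism G → GL(T_xX) sending each g ∈ G to the differential at x of the diffeomorphism ρ(g) is injective. -/
open scoped Manifold

/-- The group of self-homeomorphisms of a topological space, with `(f * g) x = f (g x)`. -/
instance homeoGroup (X : Type*) [TopologicalSpace X] : Group (X ≃ₜ X) where
  mul f g := g.trans f
  one := Homeomorph.refl X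
  inv := Homeomorph.symm
  mul_assoc _ _ _ := Homeomorph.ext fun _ => rfl
  one_mul _ := Homeomorph.ext fun _ => rfl
  mul_one _ := Homeomorph.ext fun _ => rfl
  inv_mul_cancel := Homeomorph.self_trans_symm

/-!
It suffices to show that an element `g` with `dρ(g)_x = id` acts trivially (apply this to
`b⁻¹ * a`). Since `g` has finite order `k`, Bochner's averaging trick shows that a `C¹` map `f`
with `f^[k] = id` that fixes a point `y` with `df_y = id` is the identity near `y`. Hence the set
of points near which `ρ g` is the identity contains `x`. It is open, and it is closed: at a point
of its closure, `ρ g` has a fixed point (by Hausdorffness) whose differential is the identity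
(by continuity of the derivative). By connectedness `ρ g = id`, and effectiveness gives `g = 1`.
-/

open Set Filter Topology Function

theorem Filter.Eventually.iterate_semiconj {α β : Type*} {l : Filter α} {φ : α → β}
    {f : α → α} {F : β → β} (hf : Tendsto f l l) (h : ∀ᶠ z in l, F (φ z) = φ (f z)) (i : ℕ) :
    ∀ᶠ z in l, F^[i] (φ z) = φ (f^[i] z) := by
  induction i with
  | zero => exact univ_mem' fun _ => rfl
  | succ i ih =>
    filter_upwards [h, hf.eventually ih] with z hz hiz
    rw [iterate_succ_apply, iterate_succ_apply, hz, hiz]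

section NormedSpace

variable {𝕜 E : Type*} [NontriviallyNormedField 𝕜] [NormedAddCommGroup E] [NormedSpace 𝕜 E]

theorem fderiv_eq_id_of_mem_closure {F : E → E} {x₀ : E} (hF : ContinuousAt (fderiv 𝕜 F) x₀)
    (hx₀ : x₀ ∈ closure {v | F =ᶠ[𝓝 v] id}) : fderiv 𝕜 F x₀ = ContinuousLinearMap.id 𝕜 E := by
  have himage : fderiv 𝕜 F '' {v | F =ᶠ[𝓝 v] id} ⊆ {ContinuousLinearMap.id 𝕜 E} := by
    rintro _ ⟨v, hv, rfl⟩
    exact hv.fderiv_eq.trans fderiv_id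
  simpa using closure_mono himage (mem_closure_image hF hx₀)

variable [CompleteSpace E]

theorem eventuallyEq_id_of_comp_eventuallyEq {E' : Type*} [NormedAddCommGroup E']
    [NormedSpace 𝕜 E'] {F : E → E} {H : E → E'} {H' : E ≃L[𝕜] E'} {x₀ : E}
    (hH : HasStrictFDerivAt H (H' : E →L[𝕜] E') x₀) (hF : ContinuousAt F x₀) (hFx₀ : F x₀ = x₀)
    (hHF : ∀ᶠ z in 𝓝 x₀, H (F z) = H z) : F =ᶠ[𝓝 x₀] id := by
  have hFt : Tendsto F (𝓝 x₀) (𝓝 x₀) := by simpa only [hFx₀] using hF.tendsto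
  filter_upwards [hH.eventually_left_inverse, hFt.eventually hH.eventually_left_inverse, hHF]
    with z hz hFz hHz
  rw [id_eq, ← hFz, hHz, hz]

/-- Bochner's averaging trick: `H = k⁻¹ • ∑_{i<k} F^[i]` has derivative the identity at `x₀`
and satisfies `H ∘ F = H` near `x₀`, so `F` is the identity by local injectivity of `H`. -/
theorem eventuallyEq_id_of_iterate_eventuallyEq_id [CharZero 𝕜] {F : E → E} {x₀ : E} {k : ℕ}
    (hk : k ≠ 0) (hF : HasStrictFDerivAt F (ContinuousLinearMap.id 𝕜 E) x₀) (hFx₀ : F x₀ = x₀)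
    (hFk : F^[k] =ᶠ[𝓝 x₀] id) : F =ᶠ[𝓝 x₀] id := by
  set H : E → E := fun z => (k : 𝕜)⁻¹ • ∑ i ∈ Finset.range k, F^[i] z
  have hH : HasStrictFDerivAt H (ContinuousLinearEquiv.refl 𝕜 E : E →L[𝕜] E) x₀ := by
    refine ((HasStrictFDerivAt.fun_sum (u := Finset.range k) fun i _ =>
      hF.iterate hFx₀ i).const_smul (k : 𝕜)⁻¹).congr_fderiv ?_
    simp only [← ContinuousLinearMap.one_def, one_pow, Finset.sum_const, Finset.card_range]
    rw [← Nat.cast_smul_eq_nsmul 𝕜, inv_smul_smul₀ (Nat.cast_ne_zero.mpr hk)]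
    rfl
  refine eventuallyEq_id_of_comp_eventuallyEq hH hF.continuousAt hFx₀ ?_
  filter_upwards [hFk] with z hz
  have hshift : ∑ i ∈ Finset.range k, F^[i] (F z) = ∑ i ∈ Finset.range k, F^[i] z := by
    have := Finset.sum_range_succ' (fun i => F^[i] z) k
    rw [Finset.sum_range_succ, hz] at this
    simpa [iterate_succ_apply] using this.symm
  simp only [H, hshift]

end NormedSpace

section Manifold

variable {𝕜 E H M : Type*} [RCLike 𝕜] [NormedAddCommGroup E] [NormedSpace 𝕜 E]
  [TopologicalSpace H] {I : ModelWithCorners 𝕜 E H} [TopologicalSpace M] [ChartedSpace H M]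

/-- At a fixed point `y` of `f` this agrees with `writtenInExtChartAt I I y f`. -/
noncomputable def chartRep (I : ModelWithCorners 𝕜 E H) (y : M) (f : M → M) : E → E :=
  extChartAt I y ∘ f ∘ (extChartAt I y).symm

theorem chartRep_extChartAt {f : M → M} {y z : M} (hz : z ∈ (extChartAt I y).source) :
    chartRep I y f (extChartAt I y z) = extChartAt I y (f z) := by
  simp only [chartRep, comp_apply, (extChartAt I y).left_inv hz]

theorem mfderiv_eq_fderiv_chartRep [I.Boundaryless] {f : M → M} {y : M}
    (hf : MDifferentiableAt I I f y) (hfy : f y = y) :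
    mfderiv I I f y = fderiv 𝕜 (chartRep I y f) (extChartAt I y y) := by
  rw [hf.mfderiv, I.range_eq_univ, fderivWithin_univ]
  simp only [writtenInExtChartAt, chartRep, hfy]
  rfl

theorem ContMDiffAt.contDiffAt_chartRep [I.Boundaryless] {n : WithTop ℕ∞} {f : M → M} {y : M}
    (hf : ContMDiffAt I I n f y) (hfy : f y = y) :
    ContDiffAt 𝕜 n (chartRep I y f) (extChartAt I y y) := by
  have h := (contMDiffAt_iff.mp hf).2
  rwa [hfy, I.range_eq_univ, contDiffWithinAt_univ] at h

theorem chartRep_eventuallyEq_id_iff [I.Boundaryless] {f : M → M} {y z : M}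
    (hz : z ∈ (extChartAt I y).source) (hf : ContinuousAt f z) (hfz : f z = z) :
    chartRep I y f =ᶠ[𝓝 (extChartAt I y z)] id ↔ f =ᶠ[𝓝 z] id := by
  rw [EventuallyEq, ← nhdsWithin_univ, ← I.range_eq_univ, ← map_extChartAt_nhds' hz,
    eventually_map]
  have hsource : ∀ᶠ w in 𝓝 z, w ∈ (extChartAt I y).source ∧ f w ∈ (extChartAt I y).source :=
    Eventually.and (extChartAt_source_mem_nhds' hz)
      (hf.preimage_mem_nhds (extChartAt_source_mem_nhds' (hfz.symm ▸ hz)))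
  refine eventually_congr (hsource.mono fun w ⟨hw, hfw⟩ => ?_)
  rw [chartRep_extChartAt hw, id_eq, id_eq]
  exact (extChartAt I y).injOn.eq_iff hfw hw

theorem chartRep_iterate_eventuallyEq_id [I.Boundaryless] {f : M → M} {y : M} {k : ℕ}
    (hf : ContinuousAt f y) (hfy : f y = y) (hfk : f^[k] =ᶠ[𝓝 y] id) :
    (chartRep I y f)^[k] =ᶠ[𝓝 (extChartAt I y y)] id := by
  rw [EventuallyEq, ← map_extChartAt_nhds_of_boundaryless, eventually_map]
  have hsemiconj : ∀ᶠ w in 𝓝 y, chartRep I y f (extChartAt I y w) = extChartAt I y (f w) :=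
    Eventually.mono (extChartAt_source_mem_nhds y) fun _ hw => chartRep_extChartAt hw
  have hft : Tendsto f (𝓝 y) (𝓝 y) := by simpa only [hfy] using hf.tendsto
  filter_upwards [hsemiconj.iterate_semiconj hft k, hfk] with w hw hkw
  rw [hw, hkw, id_eq, id_eq]

theorem mfderiv_eq_id_of_mem_closure [I.Boundaryless] {f : M → M} {y : M}
    (hf : ContMDiffAt I I 1 f y) (hfy : f y = y) (hy : y ∈ closure {z | f =ᶠ[𝓝 z] id}) :
    mfderiv I I f y = ContinuousLinearMap.id 𝕜 E := by
  rw [mfderiv_eq_fderiv_chartRep (hf.mdifferentiableAt one_ne_zero) hfy]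
  refine fderiv_eq_id_of_mem_closure
    ((hf.contDiffAt_chartRep hfy).continuousAt_fderiv one_ne_zero) ?_
  have hy' : y ∈ closure ({z | f =ᶠ[𝓝 z] id} ∩ (extChartAt I y).source) := by
    rw [inter_comm]
    exact (isOpen_extChartAt_source y).inter_closure ⟨mem_extChartAt_source y, hy⟩
  refine closure_mono ?_ (mem_closure_image (continuousAt_extChartAt y) hy')
  rintro _ ⟨z, ⟨hzS, hz⟩, rfl⟩
  exact (chartRep_eventuallyEq_id_iff hz (continuousAt_id.congr hzS.symm)
    hzS.self_of_nhds).mpr hzS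

theorem eventuallyEq_id_of_mfderiv_eq_id [I.Boundaryless] [CompleteSpace E] {f : M → M} {y : M}
    {k : ℕ} (hk : k ≠ 0) (hf : ContMDiffAt I I 1 f y) (hfy : f y = y) (hfk : f^[k] =ᶠ[𝓝 y] id)
    (hdf : mfderiv I I f y = ContinuousLinearMap.id 𝕜 E) : f =ᶠ[𝓝 y] id := by
  rw [← chartRep_eventuallyEq_id_iff (mem_extChartAt_source (I := I) y) hf.continuousAt hfy]
  have hF := (hf.contDiffAt_chartRep hfy).hasStrictFDerivAt one_ne_zero
  rw [← mfderiv_eq_fderiv_chartRep (hf.mdifferentiableAt one_ne_zero) hfy, hdf] at hF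
  exact eventuallyEq_id_of_iterate_eventuallyEq_id hk hF
    (by rw [chartRep_extChartAt (mem_extChartAt_source y), hfy])
    (chartRep_iterate_eventuallyEq_id hf.continuousAt hfy hfk)

theorem eq_id_of_iterate_eq_id_of_mfderiv_eq_id [I.Boundaryless] [CompleteSpace E] [T2Space M]
    [ConnectedSpace M] {f : M → M} {x : M} {k : ℕ} (hk : k ≠ 0) (hf : ContMDiff I I 1 f)
    (hfk : f^[k] = id) (hfx : f x = x) (hdf : mfderiv I I f x = ContinuousLinearMap.id 𝕜 E) :
    f = id := by
  have hfk' : ∀ y, f^[k] =ᶠ[𝓝 y] id := fun _ => hfk ▸ EventuallyEq.rfl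
  set S := {z | f =ᶠ[𝓝 z] id}
  have hclosed : IsClosed S := by
    refine isClosed_of_closure_subset fun y hy => ?_
    have hfy : f y = y :=
      EqOn.closure (fun _ hz => hz.self_of_nhds) hf.continuous continuous_id hy
    exact eventuallyEq_id_of_mfderiv_eq_id hk hf.contMDiffAt hfy (hfk' y)
      (mfderiv_eq_id_of_mem_closure hf.contMDiffAt hfy hy)
  have hS : S = univ := IsClopen.eq_univ ⟨hclosed, isOpen_setOfPred_eventually_nhds⟩
    ⟨x, eventuallyEq_id_of_mfderiv_eq_id hk hf.contMDiffAt hfx (hfk' x) hdf⟩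
  funext y
  exact (hS ▸ mem_univ y : y ∈ S).self_of_nhds

end Manifold

theorem homeoGroup_coe_pow {X : Type*} [TopologicalSpace X] (f : X ≃ₜ X) (k : ℕ) :
    ⇑(f ^ k) = (⇑f)^[k] := by
  induction k with
  | zero => rfl
  | succ k ih => rw [pow_succ, iterate_succ, ← ih]; rfl

theorem mfderiv_map_mul_of_fixed {𝕜 E H M G : Type*} [NontriviallyNormedField 𝕜]
    [NormedAddCommGroup E] [NormedSpace 𝕜 E] [TopologicalSpace H] {I : ModelWithCorners 𝕜 E H}
    [TopologicalSpace M] [ChartedSpace H M] [Group G] (ρ : G →* (M ≃ₜ M)) {x : M}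
    (hρ : ∀ g, MDifferentiableAt I I (ρ g) x) (hx : ∀ g, ρ g x = x) (g h : G) :
    mfderiv I I (ρ (g * h)) x = (mfderiv I I (ρ g) x).comp (mfderiv I I (ρ h) x) := by
  have hcomp : ⇑(ρ (g * h)) = ρ g ∘ ρ h := by rw [map_mul]; rfl
  rw [hcomp, mfderiv_comp x (by rw [hx h]; exact hρ g) (hρ h), hx h]

theorem linearisation_injective_at_fixed_point_general {n : ℕ} (X : Type*) [TopologicalSpace X]
    [T2Space X] [ChartedSpace (EuclideanSpace ℝ (Fin n)) X]
    [ConnectedSpace X]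
    (G : Type*) [Group G] [Finite G] (ρ : G →* (X ≃ₜ X))
    (hsmooth : ∀ g : G, ContMDiff (𝓡 n) (𝓡 n) (⊤ : ℕ∞) (ρ g))
    (hρ : Function.Injective ρ) (x : X) (hx : ∀ g : G, ρ g x = x) :
    Function.Injective (fun g : G =>
      show TangentSpace (𝓡 n) x →L[ℝ] TangentSpace (𝓡 n) x from
        mfderiv (𝓡 n) (𝓡 n) (ρ g) x) := by
  intro a b hab
  have hC1 : ∀ g, ContMDiff (𝓡 n) (𝓡 n) 1 (ρ g) := fun g =>
    (hsmooth g).of_le (by exact_mod_cast le_top)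
  have hdiff : ∀ g, MDifferentiableAt (𝓡 n) (𝓡 n) (ρ g) x := fun g =>
    (hC1 g).mdifferentiableAt one_ne_zero
  have hab' : mfderiv (𝓡 n) (𝓡 n) (ρ a) x = mfderiv (𝓡 n) (𝓡 n) (ρ b) x := hab
  have hderiv : mfderiv (𝓡 n) (𝓡 n) (ρ (b⁻¹ * a)) x =
      ContinuousLinearMap.id ℝ (TangentSpace (𝓡 n) x) := by
    rw [mfderiv_map_mul_of_fixed ρ hdiff hx, hab', ← mfderiv_map_mul_of_fixed ρ hdiff hx,
      inv_mul_cancel, map_one]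
    exact mfderiv_id
  have hperiodic : (⇑(ρ (b⁻¹ * a)))^[orderOf (b⁻¹ * a)] = id := by
    rw [← homeoGroup_coe_pow, ← map_pow, pow_orderOf_eq_one, map_one]; rfl
  have hid := eq_id_of_iterate_eq_id_of_mfderiv_eq_id (orderOf_pos _).ne' (hC1 _) hperiodic
    (hx _) hderiv
  have hone : b⁻¹ * a = 1 := hρ (by rw [map_one]; exact Homeomorph.ext (congrFun hid))
  exact (inv_mul_eq_one.mp hone).symm

/-- Let `X` be a connected smooth manifold, let the finite group `G` act smoothly and
effectively on `X`, and let `x` be a point fixed by every element of `G`. Then the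
homomorphism sending `g` to the differential at `x` of the action of `g` is injective. -/
theorem linearisation_injective_at_fixed_point {n : ℕ} (X : Type*) [TopologicalSpace X]
    [T2Space X] [ChartedSpace (EuclideanSpace ℝ (Fin n)) X]
    [IsManifold (𝓡 n) ((⊤ : ℕ∞) : WithTop ℕ∞) X] [ConnectedSpace X]
    (G : Type*) [Group G] [Finite G] (ρ : G →* (X ≃ₜ X))
    (hsmooth : ∀ g : G, ContMDiff (𝓡 n) (𝓡 n) (⊤ : ℕ∞) (ρ g))
    (hρ : Function.Injective ρ) (x : X) (hx : ∀ g : G, ρ g x = x) :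
    Function.Injective (fun g : G =>
      show TangentSpace (𝓡 n) x →L[ℝ] TangentSpace (𝓡 n) x from
        mfderiv (𝓡 n) (𝓡 n) (ρ g) x) :=
  linearisation_injective_at_fixed_point_general X G ρ hsmooth hρ x hx
end

section
/- Let H ≤ G be an inclusion of finite groups, and let Aut(G, H) = {φ ∈ Aut(G) : φ(H) = H}. Then [Aut(G) : Aut(G, H)] ≤ ([G : H]!)^{d(H) + [G : H]}, and if H is normal in G then [Aut(G) : Aut(G, H)] ≤ [G : H]^{d(H) + [G : H]}. -/
open scoped Pointwise

/-!
An automorphism `φ` moves the preimage `K.comap f` of a subgroup `K ≤ M` to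
`K.comap (f ∘ φ⁻¹)`, so the `Aut(G)`-orbit of `K.comap f`, whose size is the index of its
stabilizer, has at most `|Hom(G, M)| ≤ |M| ^ d(G)` elements. Every `H` is such a preimage: of the
stabilizer of the trivial coset under `G → Perm(G ⧸ H)`, and, when `H` is normal, of `⊥` under
`G → G ⧸ H`. Finally `d(G) ≤ d(H) + [G : H]`, since generators of `H` together with coset
representatives generate `G`.
-/

theorem Nat.card_monoidHom_le_pow_rank (G M : Type*) [Group G] [Group.FG G] [Group M] [Finite M] :
    Nat.card (G →* M) ≤ Nat.card M ^ Group.rank G := by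
  obtain ⟨S, hcard, hS⟩ := Group.rank_spec G
  have hinj : Function.Injective fun (f : G →* M) (s : S) => f s := fun f g hfg =>
    MonoidHom.eq_of_eqOn_top (hS ▸ MonoidHom.eqOn_closure fun x hx => congrFun hfg ⟨x, hx⟩)
  calc Nat.card (G →* M) ≤ Nat.card (S → M) := Nat.card_le_card_of_injective _ hinj
    _ = Nat.card M ^ Group.rank G := by simp [Nat.card_fun, hcard]

theorem Subgroup.sup_closure_range_out_eq_top {G : Type*} [Group G] (H : Subgroup G) :
    H ⊔ closure (Set.range (Quotient.out : G ⧸ H → G)) = ⊤ := by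
  refine eq_top_iff.2 fun g _ => ?_
  obtain ⟨h, hh⟩ := QuotientGroup.mk_out_eq_mul H g
  have hg : g = (g : G ⧸ H).out * (h : G)⁻¹ := by rw [hh, mul_inv_cancel_right]
  rw [hg]
  exact mul_mem (mem_sup_right (subset_closure ⟨_, rfl⟩)) (mem_sup_left (inv_mem h.2))

theorem Group.rank_le_rank_add_index {G : Type*} [Group G] [Finite G] (H : Subgroup G) :
    Group.rank G ≤ Group.rank H + H.index := by
  classical
  have := Fintype.ofFinite (G ⧸ H)
  obtain ⟨S, hcard, hS⟩ := Group.rank_spec H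
  have hSH : Subgroup.closure (S.image H.subtype : Set G) = H := by
    rw [Finset.coe_image, ← MonoidHom.map_closure, hS, ← MonoidHom.range_eq_map,
      Subgroup.range_subtype]
  have hU : Subgroup.closure
      ((S.image H.subtype ∪ (Finset.univ : Finset (G ⧸ H)).image Quotient.out : Finset G) :
        Set G) = ⊤ := by
    rw [Finset.coe_union, Subgroup.closure_union, hSH, Finset.coe_image, Finset.coe_univ,
      Set.image_univ]
    exact H.sup_closure_range_out_eq_top
  calc Group.rank G ≤ _ := Group.rank_le hU
    _ ≤ S.card + Fintype.card (G ⧸ H) :=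
      (Finset.card_union_le _ _).trans (add_le_add Finset.card_image_le Finset.card_image_le)
    _ = Group.rank H + H.index := by rw [hcard, Subgroup.index, Nat.card_eq_fintype_card]

theorem Subgroup.mulAut_smul_comap {G M : Type*} [Group G] [Group M] (φ : MulAut G)
    (f : G →* M) (K : Subgroup M) : φ • K.comap f = K.comap (f.comp φ.symm.toMonoidHom) := by
  ext g
  rw [Subgroup.mem_pointwise_smul_iff_inv_smul_mem]
  rfl

theorem Subgroup.index_stabilizer_mulAut_comap_le {G M : Type*} [Group G] [Finite G] [Group M]
    [Finite M] (f : G →* M) (K : Subgroup M) :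
    (MulAction.stabilizer (MulAut G) (K.comap f)).index ≤ Nat.card M ^ Group.rank G := by
  have : Finite (G →* M) := Finite.of_injective _ DFunLike.coe_injective
  have hsub :
      MulAction.orbit (MulAut G) (K.comap f) ⊆ Set.range fun f' : G →* M => K.comap f' := by
    rintro _ ⟨φ, rfl⟩
    exact ⟨_, (mulAut_smul_comap φ f K).symm⟩
  calc (MulAction.stabilizer (MulAut G) (K.comap f)).index
      = Nat.card (MulAction.orbit (MulAut G) (K.comap f)) := MulAction.index_stabilizer _ _
    _ ≤ Nat.card (Set.range fun f' : G →* M => K.comap f') :=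
      Nat.card_mono (Set.finite_range _) hsub
    _ ≤ Nat.card (G →* M) := Finite.card_range_le _
    _ ≤ Nat.card M ^ Group.rank G := Nat.card_monoidHom_le_pow_rank G M

/-- Let `H ≤ G` be an inclusion of finite groups, and let `Aut(G, H) ≤ Aut(G)` be the subgroup
of automorphisms `φ` of `G` with `φ(H) = H` (the stabilizer of `H` under the pointwise action
of `Aut(G)` on subgroups of `G`). Then
`[Aut(G) : Aut(G, H)] ≤ ([G : H]!) ^ (d(H) + [G : H])`, and if `H` is normal then
`[Aut(G) : Aut(G, H)] ≤ [G : H] ^ (d(H) + [G : H])`. -/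
theorem index_of_aut_preserving_subgroup (G : Type*) [Group G] [Finite G] (H : Subgroup G) :
    (MulAction.stabilizer (MulAut G) H).index ≤
        (Nat.factorial H.index) ^ (Group.rank H + H.index) ∧
      (H.Normal → (MulAction.stabilizer (MulAut G) H).index ≤
        H.index ^ (Group.rank H + H.index)) := by
  have hrank := Group.rank_le_rank_add_index H
  constructor
  · have hH : H = (MulAction.stabilizer (Equiv.Perm (G ⧸ H)) ((1 : G) : G ⧸ H)).comap
        (MulAction.toPermHom G (G ⧸ H)) := (MulAction.stabilizer_quotient H).symm
    calc (MulAction.stabilizer (MulAut G) H).index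
        ≤ Nat.card (Equiv.Perm (G ⧸ H)) ^ Group.rank G := by
          conv_lhs => rw [hH]
          exact Subgroup.index_stabilizer_mulAut_comap_le _ _
      _ ≤ _ := by rw [Nat.card_perm]; exact Nat.pow_le_pow_right (Nat.factorial_pos _) hrank
  · intro hN
    have hH : H = (⊥ : Subgroup (G ⧸ H)).comap (QuotientGroup.mk' H) :=
      (QuotientGroup.ker_mk' H).symm
    calc (MulAction.stabilizer (MulAut G) H).index ≤ Nat.card (G ⧸ H) ^ Group.rank G := by
          conv_lhs => rw [hH]
          exact Subgroup.index_stabilizer_mulAut_comap_le _ _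
      _ ≤ _ := Nat.pow_le_pow_right Nat.card_pos hrank
end
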